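/- arXiv:2201.05279 — 2 statements merged into one kernel-verified Lean document; each statement's English description precedes it below -/
import Mathlib

section
/- Let p ∈ (0,1] and δ ∈ (0,1), and let n be a positive integer with n ≥ 2·(1 + log(1/δ))/p. If N is a binomial random variable with parameters n and p, then P(N > 1) ≥ 1 − δ. -/
/-!
With `x = (n - 1) p`, the probability of at most one success is `(1 - p)^(n-1) (1 + x)`, which
`1 - p ≤ e^(-p)` bounds by `(1 + x) e^(-x)`. The tangent line of `2 e^((x-1)/2)` at `x = 1` gives
`1 + x ≤ 2 e^((x-1)/2)`, hence `(1 + x) e^(-x) ≤ 2 e^(-(x+1)/2)`, and the sample-size threshold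
`x ≥ 1 + 2 log(1/δ)` together with `2 ≤ e` makes this at most `δ`.
-/

open Finset Real

section
variable {R : Type*} [CommRing R]

theorem sum_range_choose_mul_pow_mul_one_sub_pow (p : R) (n : ℕ) :
    ∑ k ∈ range (n + 1), (n.choose k : R) * p ^ k * (1 - p) ^ (n - k) = 1 := by
  have binomial := (add_pow p (1 - p) n).symm
  rw [add_sub_cancel, one_pow] at binomial
  exact (sum_congr rfl fun k _ => by ring).trans binomial

theorem one_sub_pow_add_mul_one_sub_pow_pred (p : R) (n : ℕ) :
    (1 - p) ^ n + n * p * (1 - p) ^ (n - 1) = (1 - p) ^ (n - 1) * (1 + (n - 1 : ℕ) * p) := by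
  cases n with
  | zero => simp
  | succ m => push_cast [Nat.add_sub_cancel]; ring

theorem sum_filter_one_lt_choose_mul_pow_mul_one_sub_pow (p : R) (n : ℕ) :
    ∑ k ∈ (range (n + 1)).filter (1 < ·), (n.choose k : R) * p ^ k * (1 - p) ^ (n - k) =
      1 - (1 - p) ^ (n - 1) * (1 + (n - 1 : ℕ) * p) := by
  have at_most_one : ∑ k ∈ (range (n + 1)).filter (¬ 1 < ·),
      (n.choose k : R) * p ^ k * (1 - p) ^ (n - k) = (1 - p) ^ n + n * p * (1 - p) ^ (n - 1) := by
    cases n with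
    | zero => simp [filter_singleton]
    | succ m =>
      have : (range (m + 2)).filter (¬ 1 < ·) = {0, 1} := by
        ext
        simp only [not_lt, mem_filter, mem_range, mem_insert, mem_singleton]
        omega
      rw [this]; simp
  rw [← one_sub_pow_add_mul_one_sub_pow_pred, ← at_most_one, eq_sub_iff_add_eq,
    sum_filter_add_sum_filter_not, sum_range_choose_mul_pow_mul_one_sub_pow]
end

theorem one_add_mul_exp_neg_le_exp_neg {x L : ℝ} (h : 1 + 2 * L ≤ x) :
    (1 + x) * exp (-x) ≤ exp (-L) := by
  have tangent : 1 + x ≤ 2 * exp ((x - 1) / 2) := by linarith [add_one_le_exp ((x - 1) / 2)]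
  have two_le_exp_one : 2 ≤ exp 1 := by linarith [add_one_le_exp 1]
  calc (1 + x) * exp (-x) ≤ 2 * exp ((x - 1) / 2) * exp (-x) := by gcongr
    _ = 2 * exp (-1) * exp (-((x + 1) / 2 - 1)) := by
        rw [mul_assoc, mul_assoc, ← exp_add, ← exp_add]; ring_nf
    _ ≤ 1 * exp (-L) := by
        gcongr
        · rw [exp_neg, ← div_eq_mul_inv, div_le_one (exp_pos 1)]; exact two_le_exp_one
        · linarith
    _ = exp (-L) := one_mul _

theorem one_sub_pow_mul_one_add_le_exp_neg {p L : ℝ} (hp0 : 0 ≤ p) (hp1 : p ≤ 1) {m : ℕ}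
    (h : 1 + 2 * L ≤ m * p) : (1 - p) ^ m * (1 + m * p) ≤ exp (-L) :=
  calc (1 - p) ^ m * (1 + m * p) ≤ exp (-p) ^ m * (1 + m * p) := by
        gcongr
        exact one_sub_le_exp_neg p
    _ = (1 + m * p) * exp (-(m * p)) := by rw [← exp_nat_mul]; ring_nf
    _ ≤ exp (-L) := one_add_mul_exp_neg_le_exp_neg h

theorem binomial_more_than_one_prob_ge_one_sub_delta_general
    (p δ : ℝ) (hp0 : 0 < p) (hp1 : p ≤ 1) (hδ0 : 0 < δ)
    (n : ℕ) (hnth : 2 * (1 + Real.log (1 / δ)) / p ≤ (n : ℝ)) :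
    1 - δ ≤
      ∑ k ∈ (Finset.range (n + 1)).filter (fun k => 1 < k),
        (n.choose k : ℝ) * p ^ k * (1 - p) ^ (n - k) := by
  rw [sum_filter_one_lt_choose_mul_pow_mul_one_sub_pow, sub_le_sub_iff_left]
  have hnp : 2 * (1 + log (1 / δ)) ≤ n * p := (div_le_iff₀ hp0).mp hnth
  have hpred : (n : ℝ) - 1 ≤ (n - 1 : ℕ) := by
    rw [sub_le_iff_le_add]; exact_mod_cast (by omega : n ≤ n - 1 + 1)
  calc (1 - p) ^ (n - 1) * (1 + (n - 1 : ℕ) * p) ≤ exp (-log (1 / δ)) :=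
        one_sub_pow_mul_one_add_le_exp_neg hp0.le hp1 (by nlinarith)
    _ = δ := by rw [one_div, log_inv, neg_neg, exp_log hδ0]

/-- Combined sampling lemma: if `p ∈ (0,1]`, `δ ∈ (0,1)`, `n` is a positive integer
with `n ≥ 2·(1 + log(1/δ))/p`, and `N` is binomial with parameters `n` and `p`,
then `P(N > 1) ≥ 1 − δ`. -/
theorem binomial_more_than_one_prob_ge_one_sub_delta
    (p δ : ℝ) (hp0 : 0 < p) (hp1 : p ≤ 1) (hδ0 : 0 < δ) (hδ1 : δ < 1)
    (n : ℕ) (hn : 0 < n) (hnth : 2 * (1 + Real.log (1 / δ)) / p ≤ (n : ℝ)) :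
    1 - δ ≤
      ∑ k ∈ (Finset.range (n + 1)).filter (fun k => 1 < k),
        (n.choose k : ℝ) * p ^ k * (1 - p) ^ (n - k) :=
  binomial_more_than_one_prob_ge_one_sub_delta_general p δ hp0 hp1 hδ0 n hnth
end

section
/- Let σ(t) = max(t, 0) denote the ReLU function, let h_1, …, h_D : ℝ^D → ℝ be functions, let μ > 0, and define recursively F_1(x) = h_1(x) and F_{j+1}(x) = σ(F_j(x) − μ^j · σ(h_{j+1}(x))) for j = 1, …, D−1. Then for every x: (i) 0 ≤ F_j(x) ≤ max(h_1(x), 0) for all j ≥ 2; (ii) if h_1(x) ≥ 0 and h_j(x) ≤ 0 for all j = 2, …, D, then F_D(x) = h_1(x); (iii) if there exists j ∈ {2, …, D} with h_j(x) > 0 and μ^{j−1}·h_j(x) ≥ max(h_1(x), 0), then F_D(x) = 0. -/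
/-- Key properties of the fan-shaped ReLU network building block.
Here `h j` (zero-based) is the paper's `h_{j+1}` and `F j` (zero-based) is the
paper's `F_{j+1}`, with `σ(t) = max t 0` and recursion
`F_{j+1}(x) = σ(F_j(x) − μ^j · σ(h_{j+1}(x)))`:
(i) `0 ≤ F_j(x) ≤ max(h_1(x), 0)` for all `j ≥ 2` (one-based);
(ii) if `h_1(x) ≥ 0` and `h_j(x) ≤ 0` for `j = 2,…,D`, then `F_D(x) = h_1(x)`;
(iii) if some `h_j(x) > 0` (`j ≥ 2`) with `μ^{j−1}·h_j(x) ≥ max(h_1(x),0)`,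
then `F_D(x) = 0`. -/
theorem fan_shaped_relu_network_properties
    (D : ℕ) (hD : 1 ≤ D)
    (h : Fin D → (Fin D → ℝ) → ℝ) (μ : ℝ) (hμ : 0 < μ)
    (F : ℕ → (Fin D → ℝ) → ℝ)
    (hF0 : ∀ x, F 0 x = h ⟨0, by omega⟩ x)
    (hFrec : ∀ j : ℕ, ∀ hj : j + 1 < D, ∀ x,
      F (j + 1) x = max (F j x - μ ^ (j + 1) * max (h ⟨j + 1, hj⟩ x) 0) 0) :
    (∀ j : ℕ, 1 ≤ j → j < D → ∀ x,
        0 ≤ F j x ∧ F j x ≤ max (h ⟨0, by omega⟩ x) 0) ∧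
    (∀ x, 0 ≤ h ⟨0, by omega⟩ x →
        (∀ j : Fin D, 1 ≤ (j : ℕ) → h j x ≤ 0) →
        F (D - 1) x = h ⟨0, by omega⟩ x) ∧
    (∀ x, (∃ j : Fin D, 1 ≤ (j : ℕ) ∧ 0 < h j x ∧
        max (h ⟨0, by omega⟩ x) 0 ≤ μ ^ (j : ℕ) * h j x) →
        F (D - 1) x = 0) := by
  -- Part (i)
  have key : ∀ j : ℕ, 1 ≤ j → j < D → ∀ x,
      0 ≤ F j x ∧ F j x ≤ max (h ⟨0, by omega⟩ x) 0 := by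
    intro j
    induction j with
    | zero => omega
    | succ n ih =>
      intro _ hlt x
      have hc : 0 ≤ μ ^ (n + 1) * max (h ⟨n + 1, hlt⟩ x) 0 := by positivity
      have hFn : F n x ≤ max (h ⟨0, by omega⟩ x) 0 := by
        rcases Nat.eq_zero_or_pos n with rfl | hn
        · rw [hF0]; exact le_max_left _ _
        · exact (ih hn (by omega) x).2
      rw [hFrec n hlt x]
      exact ⟨le_max_right _ _, max_le (by linarith [le_max_right (h ⟨0, by omega⟩ x) (0:ℝ)]) (le_max_right _ _)⟩
  refine ⟨key, ?_, ?_⟩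
  · -- Part (ii)
    intro x h0 hneg
    have : ∀ j : ℕ, j < D → F j x = h ⟨0, by omega⟩ x := by
      intro j
      induction j with
      | zero => intro _; exact hF0 x
      | succ n ih =>
        intro hlt
        have hz : max (h ⟨n + 1, hlt⟩ x) 0 = 0 :=
          max_eq_right (hneg ⟨n + 1, hlt⟩ (by simp))
        rw [hFrec n hlt x, hz, mul_zero, sub_zero, ih (by omega)]
        exact max_eq_left h0
    exact this (D - 1) (by omega)
  · -- Part (iii)
    intro x ⟨⟨jv, hjlt⟩, hj1, hpos, hge⟩
    rcases jv with _ | n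
    · simp at hj1
    -- F (n+1) x = 0
    have hFn : F n x ≤ max (h ⟨0, by omega⟩ x) 0 := by
      rcases Nat.eq_zero_or_pos n with rfl | hn
      · rw [hF0]; exact le_max_left _ _
      · exact (key n hn (by omega) x).2
    have hmax : max (h ⟨n + 1, hjlt⟩ x) 0 = h ⟨n + 1, hjlt⟩ x := max_eq_left hpos.le
    have hzero : F (n + 1) x = 0 := by
      rw [hFrec n hjlt x, hmax]
      apply max_eq_right
      have := le_trans hFn hge
      linarith
    -- propagate zero to D - 1
    have prop : ∀ k : ℕ, n + 1 + k < D → F (n + 1 + k) x = 0 := by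
      intro k
      induction k with
      | zero => intro _; exact hzero
      | succ m ih =>
        intro hlt
        have hc : 0 ≤ μ ^ (n + 1 + m + 1) * max (h ⟨n + 1 + m + 1, by omega⟩ x) 0 := by
          positivity
        have := hFrec (n + 1 + m) (by omega) x
        rw [show n + 1 + (m + 1) = n + 1 + m + 1 from rfl, this, ih (by omega)]
        apply max_eq_right
        linarith
    have := prop (D - 1 - (n + 1)) (by omega)
    rwa [show n + 1 + (D - 1 - (n + 1)) = D - 1 by omega] at this
end
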